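/- Let f be a non-constant Rogers function and suppose ζ ∈ H satisfies f(ζ) ∈ (0, ∞) (i.e., ζ lies on the spine Γ_f of f). Then the function h(ξ) = ((ξ − ζ)(ξ + conj(ζ)))/(f(ξ) − f(ζ)), defined for ξ ∈ H ∖ {ζ} and extended at ξ = ζ by h(ζ) = 2·Re ζ / f′(ζ), is a Rogers function. -/

import Mathlib

/-!
Put `v ξ = f ξ / ξ` and `t = f ζ > 0`. As `Re v ≥ 0` and `Re (v ζ) = t Re ζ / |ζ|² > 0`, the
minimum principle for the harmonic function `Re v` gives `Re v > 0`, so `v` maps the right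
half-plane into itself and the Schwarz–Pick lemma (Schwarz's lemma conjugated by Cayley maps)
applies. If `u` is the Cayley coordinate of `ξ` about `ζ` and `m = s u` that of `v ξ` about `v ζ`,
then `|s| ≤ 1` and, because `ζ · v ζ = t` is real, the quotient
`ξ (f ξ - t) / ((ξ - ζ)(ξ + conj ζ))` is a positive multiple of
`(ζ + u conj ζ)(conj ζ + s ζ) / (1 - s u)`, a number whose real part has the sign of
`(1 - |u|²)|conj ζ + s ζ|² + (1 - |s|²)|ζ + u conj ζ|² ≥ 0`. So
`g ξ = ξ² (f ξ - f ζ) / ((ξ - ζ)(ξ + conj ζ))` is a Rogers function. It is not identically zero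
because `f` is not constant, hence has no zero by the minimum principle again, and `h = ξ² / g`
is a Rogers function because `h ξ / ξ = (g ξ / ξ)⁻¹`.
-/

open Complex ComplexConjugate Metric Set Filter Topology

def IsRogers (f : ℂ → ℂ) : Prop :=
  DifferentiableOn ℂ f {ξ : ℂ | 0 < ξ.re} ∧ ∀ ξ : ℂ, 0 < ξ.re → 0 ≤ (f ξ / ξ).re

theorem eqOn_of_re_nonneg_of_re_eq_zero {U : Set ℂ} (hU : IsOpen U) (hUc : IsPreconnected U)
    {F : ℂ → ℂ} (hF : DifferentiableOn ℂ F U) (hre : ∀ z ∈ U, 0 ≤ (F z).re)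
    {z₀ : ℂ} (hz₀ : z₀ ∈ U) (h0 : (F z₀).re = 0) : EqOn F (fun _ => F z₀) U := by
  rcases (hF.analyticOnNhd hU).is_constant_or_isOpen hUc with ⟨w, hw⟩ | hopen
  · intro z hz
    simp only [hw z hz, hw z₀ hz₀]
  · obtain ⟨ε, hε, hball⟩ := Metric.isOpen_iff.mp (hopen U subset_rfl hU) (F z₀)
      (mem_image_of_mem F hz₀)
    obtain ⟨z, hz, hFz⟩ := hball (show F z₀ - (ε / 2 : ℝ) ∈ ball (F z₀) ε by
      simp [abs_of_pos hε, hε])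
    have := hre z hz
    rw [hFz] at this
    simp [h0] at this
    linarith

theorem re_nonneg_of_continuousAt_of_punctured {F : ℂ → ℂ} {z : ℂ} (hF : ContinuousAt F z)
    (h : ∀ᶠ w in 𝓝[≠] z, 0 ≤ (F w).re) : 0 ≤ (F z).re :=
  ge_of_tendsto ((continuous_re.continuousAt.comp hF).tendsto.mono_left nhdsWithin_le_nhds) h

theorem add_conj_ne_zero {ξ ζ : ℂ} (hξ : 0 < ξ.re) (hζ : 0 < ζ.re) : ξ + conj ζ ≠ 0 := by
  intro h
  have := congrArg re h
  simp only [add_re, conj_re, zero_re] at this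
  linarith

theorem norm_sub_lt_norm_add_conj {ξ ζ : ℂ} (hξ : 0 < ξ.re) (hζ : 0 < ζ.re) :
    ‖ξ - ζ‖ < ‖ξ + conj ζ‖ := by
  rw [norm_def, norm_def]
  apply Real.sqrt_lt_sqrt (normSq_nonneg _)
  simp only [normSq_apply, sub_re, sub_im, add_re, add_im, conj_re, conj_im]
  nlinarith [mul_pos hξ hζ]

theorem re_ofReal_div_pos {t : ℝ} {ζ : ℂ} (ht : 0 < t) (hζ : 0 < ζ.re) : 0 < (t / ζ : ℂ).re := by
  rw [div_re]
  simp only [ofReal_re, ofReal_im, zero_mul, zero_div, add_zero]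
  exact div_pos (mul_pos ht hζ) (normSq_pos.mpr (ne_zero_of_re_pos hζ))

theorem re_mul_div_one_sub_mul_nonneg (ζ : ℂ) {u s : ℂ} (hu : ‖u‖ ≤ 1) (hs : ‖s‖ ≤ 1) :
    0 ≤ ((ζ + u * conj ζ) * (conj ζ + s * ζ) / (1 - s * u)).re := by
  have hu' : normSq u ≤ 1 := by rw [← Complex.sq_norm]; nlinarith [norm_nonneg u]
  have hs' : normSq s ≤ 1 := by rw [← Complex.sq_norm]; nlinarith [norm_nonneg s]
  have key : ((ζ + u * conj ζ) * (conj ζ + s * ζ)).re * (1 - s * u).re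
      + ((ζ + u * conj ζ) * (conj ζ + s * ζ)).im * (1 - s * u).im
      = ((1 - normSq u) * normSq (conj ζ + s * ζ) + (1 - normSq s) * normSq (ζ + u * conj ζ))
        / 2 := by
    simp only [normSq_apply, mul_re, mul_im, add_re, add_im, sub_re, sub_im, conj_re, conj_im,
      one_re, one_im]
    ring
  rw [div_re, ← add_div, key]
  have := normSq_nonneg (conj ζ + s * ζ)
  have := normSq_nonneg (ζ + u * conj ζ)
  exact div_nonneg (by nlinarith) (normSq_nonneg _)

theorem one_sub_ne_zero_of_norm_lt_one {u : ℂ} (hu : ‖u‖ < 1) : 1 - u ≠ 0 := by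
  rintro h
  rw [sub_eq_zero] at h
  simp [← h] at hu

noncomputable def cayley (ζ ξ : ℂ) : ℂ := (ξ - ζ) / (ξ + conj ζ)

noncomputable def cayleyInv (ζ u : ℂ) : ℂ := (ζ + u * conj ζ) / (1 - u)

theorem cayley_self (ζ : ℂ) : cayley ζ ζ = 0 := by simp [cayley]

theorem cayleyInv_zero (ζ : ℂ) : cayleyInv ζ 0 = ζ := by simp [cayleyInv]

theorem norm_cayley_lt_one {ζ ξ : ℂ} (hζ : 0 < ζ.re) (hξ : 0 < ξ.re) : ‖cayley ζ ξ‖ < 1 := by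
  rw [cayley, norm_div, div_lt_one (norm_pos_iff.mpr (add_conj_ne_zero hξ hζ))]
  exact norm_sub_lt_norm_add_conj hξ hζ

theorem cayleyInv_cayley {ζ ξ : ℂ} (hζ : 0 < ζ.re) (hξ : 0 < ξ.re) :
    cayleyInv ζ (cayley ζ ξ) = ξ := by
  have hden := add_conj_ne_zero hξ hζ
  have hζζ := add_conj_ne_zero hζ hζ
  have h1 : 1 - cayley ζ ξ = (ζ + conj ζ) / (ξ + conj ζ) := by
    rw [cayley]; field_simp; ring
  rw [cayleyInv, h1, cayley]
  field_simp
  ring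

theorem re_cayleyInv_pos {ζ u : ℂ} (hζ : 0 < ζ.re) (hu : ‖u‖ < 1) : 0 < (cayleyInv ζ u).re := by
  have hnum : (ζ + u * conj ζ).re * (1 - u).re + (ζ + u * conj ζ).im * (1 - u).im
      = (1 - normSq u) * ζ.re := by
    simp only [add_re, add_im, mul_re, mul_im, sub_re, sub_im, one_re, one_im, conj_re, conj_im,
      normSq_apply]
    ring
  have hu2 : normSq u < 1 := by rw [← Complex.sq_norm]; nlinarith [norm_nonneg u]
  rw [cayleyInv, div_re, ← add_div, hnum]
  exact div_pos (mul_pos (by linarith) hζ) (normSq_pos.mpr (one_sub_ne_zero_of_norm_lt_one hu))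

theorem differentiableOn_cayley {ζ : ℂ} (hζ : 0 < ζ.re) :
    DifferentiableOn ℂ (cayley ζ) {ξ : ℂ | 0 < ξ.re} :=
  (differentiableOn_id.sub_const _).div (differentiableOn_id.add_const _)
    fun _ hξ => add_conj_ne_zero hξ hζ

theorem differentiableOn_cayleyInv (ζ : ℂ) : DifferentiableOn ℂ (cayleyInv ζ) (ball 0 1) :=
  ((differentiableOn_const _).add (differentiableOn_id.mul_const _)).div
    ((differentiableOn_const _).sub differentiableOn_id)
    fun _ hu => one_sub_ne_zero_of_norm_lt_one (mem_ball_zero_iff.mp hu)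

theorem norm_cayley_le_of_mapsTo {v : ℂ → ℂ} (hv : DifferentiableOn ℂ v {ξ : ℂ | 0 < ξ.re})
    (hmaps : MapsTo v {ξ : ℂ | 0 < ξ.re} {ξ : ℂ | 0 < ξ.re}) {ζ ξ : ℂ} (hζ : 0 < ζ.re)
    (hξ : 0 < ξ.re) : ‖cayley (v ζ) (v ξ)‖ ≤ ‖cayley ζ ξ‖ := by
  have hinv : MapsTo (cayleyInv ζ) (ball 0 1) {ξ : ℂ | 0 < ξ.re} :=
    fun _ hu => re_cayleyInv_pos hζ (mem_ball_zero_iff.mp hu)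
  have hΦ : DifferentiableOn ℂ (cayley (v ζ) ∘ v ∘ cayleyInv ζ) (ball 0 1) :=
    (differentiableOn_cayley (hmaps hζ)).comp (hv.comp (differentiableOn_cayleyInv ζ) hinv)
      (hmaps.comp hinv)
  have hΦmaps : MapsTo (cayley (v ζ) ∘ v ∘ cayleyInv ζ) (ball 0 1) (closedBall 0 1) :=
    fun _ hu => mem_closedBall_zero_iff.mpr (norm_cayley_lt_one (hmaps hζ) (hmaps (hinv hu))).le
  have := Complex.norm_le_norm_of_mapsTo_ball hΦ hΦmaps
    (by simp [cayleyInv_zero, cayley_self]) (norm_cayley_lt_one hζ hξ)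
  rwa [Function.comp_apply, Function.comp_apply, cayleyInv_cayley hζ hξ] at this

theorem re_quotient_nonneg_of_norm_cayley_le {ζ ξ w : ℂ} {t : ℝ} (ht : 0 < t)
    (hζ : 0 < ζ.re) (hξ : 0 < ξ.re) (hw : 0 < w.re) (hne : ξ ≠ ζ)
    (hpick : ‖cayley (t / ζ) w‖ ≤ ‖cayley ζ ξ‖) :
    0 ≤ (ξ * (ξ * w - t) / ((ξ - ζ) * (ξ + conj ζ))).re := by
  set u := cayley ζ ξ with hu
  set s := cayley (t / ζ) w / u with hs
  have hζ0 := ne_zero_of_re_pos hζ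
  have hζ0' : conj ζ ≠ 0 := (map_ne_zero _).mpr hζ0
  have ht0 : (t : ℂ) ≠ 0 := ofReal_ne_zero.mpr ht.ne'
  have hξζ : ξ - ζ ≠ 0 := sub_ne_zero.mpr hne
  have hξζ' := add_conj_ne_zero hξ hζ
  have hζζ := add_conj_ne_zero hζ hζ
  have hc := re_ofReal_div_pos ht hζ
  have hwc := add_conj_ne_zero hw hc
  have hu0 : u ≠ 0 := by simp [hu, cayley, hξζ, hξζ']
  have hs1 : ‖s‖ ≤ 1 := by
    rw [hs, norm_div]; exact div_le_one_of_le₀ hpick (norm_nonneg _)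
  have hK : 0 < t / (2 * ζ.re * normSq ζ) := by
    have := normSq_pos.mpr hζ0; positivity
  have hwc' : w * conj ζ + t ≠ 0 := by
    rw [map_div₀, conj_ofReal] at hwc
    have : w * conj ζ + t = (w + t / conj ζ) * conj ζ := by rw [add_mul, div_mul_cancel₀ _ hζ0']
    exact this ▸ mul_ne_zero hwc hζ0'
  have h1m : 1 - s * u = t * (ζ + conj ζ) / (ζ * (w * conj ζ + t)) := by
    rw [hs, div_mul_cancel₀ _ hu0, cayley, map_div₀, conj_ofReal]
    field_simp
    ring
  have hG : ξ * (ξ * w - t) / ((ξ - ζ) * (ξ + conj ζ))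
      = ((t / (2 * ζ.re * normSq ζ) : ℝ) : ℂ)
        * ((ζ + u * conj ζ) * (conj ζ + s * ζ) / (1 - s * u)) := by
    rw [h1m]
    push_cast
    rw [normSq_eq_conj_mul_self, re_eq_add_conj ζ]
    simp only [hs, hu, cayley, map_div₀, conj_ofReal]
    field_simp
    ring
  rw [hG, re_ofReal_mul]
  exact mul_nonneg hK.le (re_mul_div_one_sub_mul_nonneg ζ (norm_cayley_lt_one hζ hξ).le hs1)

-- The paper's `g`, continued across `ξ = ζ` by `dslope`.
noncomputable def spineQuotient (f : ℂ → ℂ) (ζ : ℂ) (ξ : ℂ) : ℂ :=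
  ξ ^ 2 * dslope f ζ ξ / (ξ + conj ζ)

theorem spineQuotient_div_self_of_ne {f : ℂ → ℂ} {ζ ξ : ℂ} (hξ : 0 < ξ.re) (hne : ξ ≠ ζ) :
    spineQuotient f ζ ξ / ξ = ξ * (f ξ - f ζ) / ((ξ - ζ) * (ξ + conj ζ)) := by
  rw [spineQuotient, dslope_of_ne f hne, slope_def_field]
  have := ne_zero_of_re_pos hξ
  field_simp

theorem IsRogers.differentiableOn_div_self {f : ℂ → ℂ} (hf : IsRogers f) :
    DifferentiableOn ℂ (fun ξ => f ξ / ξ) {ξ : ℂ | 0 < ξ.re} :=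
  hf.1.div differentiableOn_id fun _ hξ => ne_zero_of_re_pos hξ

theorem IsRogers.div_self_eq_of_re_eq_zero {f : ℂ → ℂ} (hf : IsRogers f) {ξ₀ : ℂ}
    (hξ₀ : 0 < ξ₀.re) (h0 : (f ξ₀ / ξ₀).re = 0) {ξ : ℂ} (hξ : 0 < ξ.re) :
    f ξ / ξ = f ξ₀ / ξ₀ :=
  eqOn_of_re_nonneg_of_re_eq_zero (isOpen_re_gt 0) (convex_halfSpace_re_gt 0).isPreconnected
    hf.differentiableOn_div_self hf.2 hξ₀ h0 hξ

theorem IsRogers.re_pos_div_self {f : ℂ → ℂ} (hf : IsRogers f) {ζ : ℂ} (hζ : 0 < ζ.re)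
    (hfζ : 0 < (f ζ / ζ).re) {ξ : ℂ} (hξ : 0 < ξ.re) : 0 < (f ξ / ξ).re := by
  refine (hf.2 ξ hξ).lt_of_ne fun h => hfζ.ne' ?_
  rw [hf.div_self_eq_of_re_eq_zero hξ h.symm hζ, ← h]

theorem isRogers_spineQuotient {f : ℂ → ℂ} (hf : IsRogers f) {ζ : ℂ} (hζ : 0 < ζ.re)
    (hfζim : (f ζ).im = 0) (hfζre : 0 < (f ζ).re) : IsRogers (spineQuotient f ζ) := by
  set t := (f ζ).re
  have hfζ : f ζ = t := ext rfl hfζim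
  have hv_maps : MapsTo (fun ξ => f ξ / ξ) {ξ : ℂ | 0 < ξ.re} {ξ : ℂ | 0 < ξ.re} :=
    fun ξ hξ => hf.re_pos_div_self hζ (by rw [hfζ]; exact re_ofReal_div_pos hfζre hζ) hξ
  have hg : DifferentiableOn ℂ (spineQuotient f ζ) {ξ : ℂ | 0 < ξ.re} :=
    ((differentiableOn_id.pow 2).mul
      ((differentiableOn_dslope ((isOpen_re_gt 0).mem_nhds hζ)).mpr hf.1)).div
      (differentiableOn_id.add_const _) fun ξ hξ => add_conj_ne_zero hξ hζ
  have hre : ∀ ξ, 0 < ξ.re → ξ ≠ ζ → 0 ≤ (spineQuotient f ζ ξ / ξ).re := by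
    intro ξ hξ hne
    have hpick := norm_cayley_le_of_mapsTo hf.differentiableOn_div_self hv_maps hζ hξ
    simp only [hfζ] at hpick
    have := re_quotient_nonneg_of_norm_cayley_le hfζre hζ hξ (hv_maps hξ) hne hpick
    rwa [mul_div_cancel₀ _ (ne_zero_of_re_pos hξ), ← hfζ,
      ← spineQuotient_div_self_of_ne hξ hne] at this
  refine ⟨hg, fun ξ hξ => ?_⟩
  rcases eq_or_ne ξ ζ with rfl | hne
  · have hH := (isOpen_re_gt 0).mem_nhds hξ
    refine re_nonneg_of_continuousAt_of_punctured (F := fun η => spineQuotient f ξ η / η)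
      (((hg.div differentiableOn_id fun _ hη => ne_zero_of_re_pos hη) ξ hξ).differentiableAt
        hH).continuousAt ?_
    filter_upwards [self_mem_nhdsWithin, nhdsWithin_le_nhds hH] with η hne hη
    exact hre η hη hne
  · exact hre ξ hξ hne

theorem IsRogers.eq_zero_of_apply_eq_zero {g : ℂ → ℂ} (hg : IsRogers g) {ξ₀ : ℂ} (hξ₀ : 0 < ξ₀.re)
    (h0 : g ξ₀ = 0) {ξ : ℂ} (hξ : 0 < ξ.re) : g ξ = 0 := by
  have hconst := hg.div_self_eq_of_re_eq_zero hξ₀ (by simp [h0]) hξ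
  rw [h0, zero_div, div_eq_zero_iff] at hconst
  exact hconst.resolve_right (ne_zero_of_re_pos hξ)

theorem IsRogers.sq_div {g : ℂ → ℂ} (hg : IsRogers g) (hg0 : ∀ ξ : ℂ, 0 < ξ.re → g ξ ≠ 0) :
    IsRogers fun ξ => ξ ^ 2 / g ξ := by
  refine ⟨(differentiableOn_id.pow 2).div hg.1 hg0, fun ξ hξ => ?_⟩
  have hinv : ξ ^ 2 / g ξ / ξ = (g ξ / ξ)⁻¹ := by
    have := ne_zero_of_re_pos hξ
    field_simp
  rw [hinv, inv_re]
  exact div_nonneg (hg.2 ξ hξ) (normSq_nonneg _)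

theorem eq_of_spineQuotient_eq_zero {f : ℂ → ℂ} {ζ ξ : ℂ} (hζ : 0 < ζ.re) (hξ : 0 < ξ.re)
    (h0 : spineQuotient f ζ ξ = 0) : f ξ = f ζ := by
  rcases eq_or_ne ξ ζ with rfl | hne
  · rfl
  have := spineQuotient_div_self_of_ne (f := f) hξ hne
  rw [h0, zero_div, eq_comm] at this
  simpa [ne_zero_of_re_pos hξ, sub_ne_zero.mpr hne, add_conj_ne_zero hξ hζ, sub_eq_zero] using this

theorem sq_div_spineQuotient_of_ne (f : ℂ → ℂ) {ζ ξ : ℂ} (hξ : 0 < ξ.re) (hne : ξ ≠ ζ) :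
    ξ ^ 2 / spineQuotient f ζ ξ = (ξ - ζ) * (ξ + conj ζ) / (f ξ - f ζ) := by
  rw [spineQuotient, dslope_of_ne f hne, slope_def_field]
  rcases eq_or_ne (f ξ - f ζ) 0 with h | h
  · simp [h]
  · have := ne_zero_of_re_pos hξ
    have := sub_ne_zero.mpr hne
    field_simp

theorem sq_div_spineQuotient_self (f : ℂ → ℂ) {ζ : ℂ} (hζ : ζ ≠ 0) :
    ζ ^ 2 / spineQuotient f ζ ζ = 2 * (ζ.re : ℂ) / deriv f ζ := by
  rw [spineQuotient, dslope_same, div_div_eq_mul_div, mul_div_mul_left _ _ (pow_ne_zero 2 hζ),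
    add_conj]
  push_cast
  rfl

/-- For a non-constant Rogers function `f` and a spine point `ζ` (i.e.
`f(ζ) ∈ (0, ∞)`), the difference quotient
`h(ξ) = ((ξ−ζ)(ξ+conj ζ))/(f(ξ)−f(ζ))`, extended at `ξ = ζ` by
`h(ζ) = 2·Re ζ / f′(ζ)`, is a Rogers function. -/
theorem stmt_11 (f : ℂ → ℂ) (hf : IsRogers f)
    (hnc : ∃ ξ₁ ξ₂ : ℂ, 0 < ξ₁.re ∧ 0 < ξ₂.re ∧ f ξ₁ ≠ f ξ₂)
    (ζ : ℂ) (hζ : 0 < ζ.re) (hfζim : (f ζ).im = 0) (hfζre : 0 < (f ζ).re) :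
    ∃ h : ℂ → ℂ, IsRogers h ∧
      (∀ ξ : ℂ, 0 < ξ.re → ξ ≠ ζ →
        h ξ = ((ξ - ζ) * (ξ + (starRingEnd ℂ) ζ)) / (f ξ - f ζ)) ∧
      h ζ = 2 * (ζ.re : ℂ) / deriv f ζ := by
  have hg := isRogers_spineQuotient hf hζ hfζim hfζre
  have hg0 : ∀ ξ : ℂ, 0 < ξ.re → spineQuotient f ζ ξ ≠ 0 := by
    intro ξ hξ h0
    obtain ⟨ξ₁, ξ₂, h₁, h₂, hne⟩ := hnc
    have hfconst {η : ℂ} (hη : 0 < η.re) : f η = f ζ :=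
      eq_of_spineQuotient_eq_zero hζ hη (hg.eq_zero_of_apply_eq_zero hξ h0 hη)
    exact hne ((hfconst h₁).trans (hfconst h₂).symm)
  exact ⟨fun ξ => ξ ^ 2 / spineQuotient f ζ ξ, hg.sq_div hg0,
    fun ξ hξ hne => sq_div_spineQuotient_of_ne f hξ hne,
    sq_div_spineQuotient_self f (ne_zero_of_re_pos hζ)⟩
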